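/- Let (𝕍, ρ) be a finite-dimensional representation of 𝔰𝔬(n) by skew-symmetric endomorphisms of an inner product space, and define the conformal weight operator B : ℝⁿ ⊗ 𝕍 → ℝⁿ ⊗ 𝕍 by B(α ⊗ v) = Σ_{i=1}^n e_i ⊗ ρ(e_i ∧ α)v, where {e_i} is an orthonormal basis of ℝⁿ. Then B is equivariant for the diagonal action of 𝔰𝔬(n) on ℝⁿ ⊗ 𝕍, i.e., B commutes with the action of every element of 𝔰𝔬(n). -/

import Mathlib

noncomputable section
open scoped RealInnerProductSpace TensorProduct
open Finset

/-- Standard orthonormal basis vector of `ℝⁿ`. -/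
def esingle {n : ℕ} (i : Fin n) : EuclideanSpace ℝ (Fin n) := EuclideanSpace.single i 1

/-- `u ∧ v ∈ 𝔰𝔬(n)`, acting by `X ↦ ⟨u,X⟩v − ⟨v,X⟩u`. -/
def wedge {n : ℕ} (u v : EuclideanSpace ℝ (Fin n)) :
    Module.End ℝ (EuclideanSpace ℝ (Fin n)) :=
  ((innerSL ℝ u).toLinearMap).smulRight v - ((innerSL ℝ v).toLinearMap).smulRight u

/-!
Write `ρ(A)` also for the diagonal action. Since `A` is skew and `ρ` a Lie algebra map,
`ρ(e_i ∧ Aα) = [ρ(A), ρ(e_i ∧ α)] − ρ(Ae_i ∧ α)`, so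
`B(ρ(A)(α ⊗ v)) = Σ e_i ⊗ ρ(A)ρ(e_i ∧ α)v − Σ e_i ⊗ ρ(Ae_i ∧ α)v`.
The last sum is `Σ Aᵀe_i ⊗ ρ(e_i ∧ α)v = −Σ Ae_i ⊗ ρ(e_i ∧ α)v` (move `A` across the
Casimir element `Σ e_i ⊗ e_i`), and what remains is `ρ(A)(B(α ⊗ v))`.
-/

theorem OrthonormalBasis.sum_tmul_map_apply {ι E W : Type*} [Fintype ι]
    [NormedAddCommGroup E] [InnerProductSpace ℝ E] [FiniteDimensional ℝ E]
    [AddCommGroup W] [Module ℝ W] (b : OrthonormalBasis ι ℝ E) (f : E →ₗ[ℝ] W)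
    (A : Module.End ℝ E) :
    ∑ i, b i ⊗ₜ[ℝ] f (A (b i)) = ∑ i, LinearMap.adjoint A (b i) ⊗ₜ[ℝ] f (b i) := by
  have lhs : ∀ i, b i ⊗ₜ[ℝ] f (A (b i)) = ∑ j, ⟪b j, A (b i)⟫ • (b i ⊗ₜ[ℝ] f (b j)) := by
    intro i
    conv_lhs => rw [← b.sum_repr' (A (b i))]
    simp only [map_sum, map_smul, TensorProduct.tmul_sum, TensorProduct.tmul_smul]
  have rhs : ∀ j, LinearMap.adjoint A (b j) ⊗ₜ[ℝ] f (b j)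
      = ∑ i, ⟪b j, A (b i)⟫ • (b i ⊗ₜ[ℝ] f (b j)) := by
    intro j
    conv_lhs => rw [← b.sum_repr' (LinearMap.adjoint A (b j))]
    simp only [LinearMap.adjoint_inner_right, real_inner_comm (b j), TensorProduct.sum_tmul,
      TensorProduct.smul_tmul']
  simp only [lhs, rhs]
  exact Finset.sum_comm

section Wedge

variable {n : ℕ}

theorem esingle_eq_basisFun (i : Fin n) : esingle i = EuclideanSpace.basisFun (Fin n) ℝ i := by
  rw [EuclideanSpace.basisFun_apply, esingle]

theorem wedge_apply (u v X : EuclideanSpace ℝ (Fin n)) :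
    wedge u v X = ⟪u, X⟫ • v - ⟪v, X⟫ • u := by
  simp [wedge]

theorem adjoint_wedge (u v : EuclideanSpace ℝ (Fin n)) :
    LinearMap.adjoint (wedge u v) = -wedge u v := by
  symm
  rw [LinearMap.eq_adjoint_iff]
  intro x y
  simp only [LinearMap.neg_apply, wedge_apply, inner_neg_left, inner_sub_left, inner_sub_right,
    real_inner_smul_left, real_inner_smul_right, real_inner_comm x]
  ring

def wedgeLeft (v : EuclideanSpace ℝ (Fin n)) :
    EuclideanSpace ℝ (Fin n) →ₗ[ℝ] Module.End ℝ (EuclideanSpace ℝ (Fin n)) where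
  toFun u := wedge u v
  map_add' u u' := by
    ext1 X
    simp only [LinearMap.add_apply, wedge_apply, inner_add_left, add_smul, smul_add]
    abel
  map_smul' c u := by
    ext1 X
    simp only [LinearMap.smul_apply, wedge_apply, real_inner_smul_left, RingHom.id_apply,
      smul_sub, smul_smul, mul_comm c]

@[simp]
theorem wedgeLeft_apply (u v : EuclideanSpace ℝ (Fin n)) : wedgeLeft v u = wedge u v := rfl

theorem wedge_map_right (A : Module.End ℝ (EuclideanSpace ℝ (Fin n)))
    (hA : LinearMap.adjoint A = -A) (u v : EuclideanSpace ℝ (Fin n)) :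
    wedge u (A v) = ⁅A, wedge u v⁆ - wedge (A u) v := by
  have inner_map (w X : EuclideanSpace ℝ (Fin n)) : ⟪w, A X⟫ = -⟪A w, X⟫ := by
    rw [← LinearMap.adjoint_inner_left, hA, LinearMap.neg_apply, inner_neg_left]
  ext1 X
  simp only [Ring.lie_def, LinearMap.sub_apply, Module.End.mul_apply, wedge_apply,
    inner_map, map_sub, map_smul]
  module

end Wedge

theorem conformal_weight_operator_equivariant_general (n : ℕ)
    (V : Type*) [NormedAddCommGroup V] [InnerProductSpace ℝ V]
    (ρ : Module.End ℝ (EuclideanSpace ℝ (Fin n)) →ₗ[ℝ] Module.End ℝ V)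
    (hρ : ∀ A A' : Module.End ℝ (EuclideanSpace ℝ (Fin n)),
      LinearMap.adjoint A = -A → LinearMap.adjoint A' = -A' → ρ ⁅A, A'⁆ = ⁅ρ A, ρ A'⁆)
    (B : EuclideanSpace ℝ (Fin n) ⊗[ℝ] V →ₗ[ℝ] EuclideanSpace ℝ (Fin n) ⊗[ℝ] V)
    (hB : ∀ (α : EuclideanSpace ℝ (Fin n)) (v : V),
      B (α ⊗ₜ v) = ∑ i : Fin n, esingle i ⊗ₜ (ρ (wedge (esingle i) α) v))
    (A : Module.End ℝ (EuclideanSpace ℝ (Fin n))) (hA : LinearMap.adjoint A = -A) :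
    B ∘ₗ (TensorProduct.map A LinearMap.id + TensorProduct.map LinearMap.id (ρ A))
      = (TensorProduct.map A LinearMap.id + TensorProduct.map LinearMap.id (ρ A)) ∘ₗ B := by
  refine TensorProduct.ext' fun α v => ?_
  have rho_wedge_map_right (u : EuclideanSpace ℝ (Fin n)) : ρ (wedge u (A α)) v
      = ρ A (ρ (wedge u α) v) - ρ (wedge u α) (ρ A v) - ρ (wedge (A u) α) v := by
    rw [wedge_map_right A hA, map_sub, hρ A _ hA (adjoint_wedge _ _)]
    rfl
  have casimir : ∑ i, esingle i ⊗ₜ[ℝ] ρ (wedge (A (esingle i)) α) v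
      = -∑ i, A (esingle i) ⊗ₜ[ℝ] ρ (wedge (esingle i) α) v := by
    simpa only [esingle_eq_basisFun, hA, LinearMap.neg_apply, LinearMap.comp_apply,
      LinearMap.applyₗ_apply_apply, wedgeLeft_apply, TensorProduct.neg_tmul,
      Finset.sum_neg_distrib] using (EuclideanSpace.basisFun (Fin n) ℝ).sum_tmul_map_apply
        (LinearMap.applyₗ v ∘ₗ ρ ∘ₗ wedgeLeft α) A
  simp only [LinearMap.comp_apply, LinearMap.add_apply, TensorProduct.map_tmul,
    LinearMap.id_coe, id_eq, map_add, hB, map_sum, rho_wedge_map_right, TensorProduct.tmul_sub,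
    Finset.sum_sub_distrib, casimir, Finset.sum_add_distrib]
  abel

/-- The conformal weight operator `B(α ⊗ v) = Σ_i e_i ⊗ ρ(e_i ∧ α)v` commutes with the
diagonal action `A ⊗ id + id ⊗ ρ(A)` of every `A ∈ 𝔰𝔬(n)` (i.e. every skew-symmetric `A`),
whenever `ρ` is a representation of `𝔰𝔬(n)` by skew-symmetric endomorphisms. -/
theorem conformal_weight_operator_equivariant (n : ℕ)
    (V : Type*) [NormedAddCommGroup V] [InnerProductSpace ℝ V] [FiniteDimensional ℝ V]
    (ρ : Module.End ℝ (EuclideanSpace ℝ (Fin n)) →ₗ[ℝ] Module.End ℝ V)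
    (hρ : ∀ A A' : Module.End ℝ (EuclideanSpace ℝ (Fin n)),
      LinearMap.adjoint A = -A → LinearMap.adjoint A' = -A' → ρ ⁅A, A'⁆ = ⁅ρ A, ρ A'⁆)
    (hskew : ∀ A : Module.End ℝ (EuclideanSpace ℝ (Fin n)),
      LinearMap.adjoint A = -A → LinearMap.adjoint (ρ A) = -(ρ A))
    (B : EuclideanSpace ℝ (Fin n) ⊗[ℝ] V →ₗ[ℝ] EuclideanSpace ℝ (Fin n) ⊗[ℝ] V)
    (hB : ∀ (α : EuclideanSpace ℝ (Fin n)) (v : V),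
      B (α ⊗ₜ v) = ∑ i : Fin n, esingle i ⊗ₜ (ρ (wedge (esingle i) α) v))
    (A : Module.End ℝ (EuclideanSpace ℝ (Fin n))) (hA : LinearMap.adjoint A = -A) :
    B ∘ₗ (TensorProduct.map A LinearMap.id + TensorProduct.map LinearMap.id (ρ A))
      = (TensorProduct.map A LinearMap.id + TensorProduct.map LinearMap.id (ρ A)) ∘ₗ B :=
  conformal_weight_operator_equivariant_general n V ρ hρ B hB A hA
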